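/- (Proposition 1, exact form.) Let d ≥ 1, T > 0, r ∈ ℝ, let Π be a symmetric positive definite real d×d matrix, let σ_f ∈ ℝ, σ_l > 0, let z^1,…,z^Q ∈ ℝ^d and ω_1,…,ω_Q ∈ ℝ, and define u^GPR(z) = Σ_{q=1}^Q ω_q k_SE(z^q, z). Then e^{-rT} ∫_{ℝ^d} u^GPR(z) dN(0, T·Π)(z) = e^{-rT} Σ_{q=1}^Q ω_q σ_f² σ_l^d · exp(-(1/2)(z^q)ᵀ (T·Π + σ_l² I_d)⁻¹ z^q) / √(det(T·Π + σ_l² I_d)), where I_d denotes the d×d identity matrix. -/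

import Mathlib

open MeasureTheory Real Matrix

/-- The multivariate Gaussian probability measure on `ι → ℝ` with mean `μ` and covariance
matrix `S`: for `S` symmetric positive definite, its density with respect to the Lebesgue
measure is `z ↦ (2π)^(-d/2) det(S)^(-1/2) exp(-(1/2)(z-μ)ᵀ S⁻¹ (z-μ))`. -/
noncomputable def mvGaussian {ι : Type*} [Fintype ι] [DecidableEq ι]
    (μ : ι → ℝ) (S : Matrix ι ι ℝ) : Measure (ι → ℝ) :=
  (volume : Measure (ι → ℝ)).withDensity fun z =>
    ENNReal.ofReal ((2 * π) ^ (-(Fintype.card ι : ℝ) / 2) * S.det ^ (-(1 : ℝ) / 2) *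
      Real.exp (-(1 / 2) * ((z - μ) ⬝ᵥ S⁻¹.mulVec (z - μ))))

/-- The Squared Exponential kernel with signal variance `σf²` and length-scale `σl`:
`k_SE(x, x') = σf² exp(-‖x - x'‖²/(2σl²))`. -/
noncomputable def kSE {ι : Type*} [Fintype ι] (σf σl : ℝ) (x x' : ι → ℝ) : ℝ :=
  σf ^ 2 * Real.exp (-(∑ i, (x i - x' i) ^ 2) / (2 * σl ^ 2))

/-!
Against the density of `N(0, S)` each kernel term `k_SE(m, ·)` is an unnormalised Gaussian in `x`.
Completing the square gives
`xᵀS⁻¹x + ‖m - x‖² / σl² = (x - μ)ᵀB(x - μ) + mᵀ(S + σl² I)⁻¹m` with `B = S⁻¹ + σl⁻² I`,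
where the last term comes from the Woodbury identity. The substitution `y = √B x` gives
`∫ exp(-(x - μ)ᵀB(x - μ)/2) dx = (2π)^(d/2) / √(det B)`, and
`det S · det B = σl^(-2d) det(S + σl² I)` turns the constant into `σl^d / √det(S + σl² I)`.
-/

open scoped MatrixOrder

section Algebra
variable {ι K : Type*} [Fintype ι] [DecidableEq ι] [Field K]

lemma Matrix.add_smul_one_inv_eq_sub {S : Matrix ι ι K} {s : K} (hS : IsUnit S) (hs : s ≠ 0)
    (hB : IsUnit (S⁻¹ + s⁻¹ • (1 : Matrix ι ι K))) :
    (S + s • 1)⁻¹ = s⁻¹ • 1 - s⁻¹ ^ 2 • (S⁻¹ + s⁻¹ • (1 : Matrix ι ι K))⁻¹ := by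
  have hinv : (s • 1 : Matrix ι ι K)⁻¹ = s⁻¹ • 1 :=
    inv_eq_right_inv (by rw [smul_mul_smul, mul_one, mul_inv_cancel₀ hs, one_smul])
  have h := add_mul_mul_inv_eq_sub (s • 1 : Matrix ι ι K) 1 S 1
    (isUnit_one.smul (Units.mk0 s hs)) hS (by simpa [hinv] using hB)
  simp only [mul_one, one_mul, hinv] at h
  rw [add_comm, h]
  simp only [Matrix.smul_mul, Matrix.mul_smul, one_mul, mul_one, smul_smul, sq]

lemma Matrix.det_mul_det_inv_add_smul_one {S : Matrix ι ι K} {s : K} (hS : IsUnit S.det)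
    (hs : s ≠ 0) :
    S.det * (S⁻¹ + s⁻¹ • (1 : Matrix ι ι K)).det = s⁻¹ ^ Fintype.card ι * (S + s • 1).det := by
  rw [← det_mul, mul_add, mul_nonsing_inv S hS, Matrix.mul_smul, mul_one, ← det_smul, smul_add,
    smul_smul, inv_mul_cancel₀ hs, one_smul, add_comm]

lemma Matrix.dotProduct_mulVec_sub_inv_mulVec {B : Matrix ι ι K} (hBT : B.IsSymm)
    (hB : IsUnit B.det) (b x : ι → K) :
    (x - B⁻¹ *ᵥ b) ⬝ᵥ B *ᵥ (x - B⁻¹ *ᵥ b) = x ⬝ᵥ B *ᵥ x - 2 * (b ⬝ᵥ x) + b ⬝ᵥ B⁻¹ *ᵥ b := by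
  have hBμ : B *ᵥ (B⁻¹ *ᵥ b) = b := by rw [mulVec_mulVec, mul_nonsing_inv B hB, one_mulVec]
  have hμB : (B⁻¹ *ᵥ b) ᵥ* B = b := by rw [← mulVec_transpose, hBT.eq, hBμ]
  rw [mulVec_sub, hBμ, sub_dotProduct, dotProduct_sub, dotProduct_sub,
    dotProduct_mulVec (B⁻¹ *ᵥ b), hμB, dotProduct_comm x b, dotProduct_comm (B⁻¹ *ᵥ b) b]
  ring

end Algebra

section GaussianIntegral
variable {ι : Type*} [Fintype ι]

lemma integrable_exp_neg_half_sum_sq :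
    Integrable fun y : ι → ℝ => Real.exp (-(1 / 2) * ∑ i, y i ^ 2) := by
  simp_rw [Finset.mul_sum, Real.exp_sum]
  exact Integrable.fintype_prod (f := fun _ t => Real.exp (-(1 / 2) * t ^ 2)) fun _ => by
    simpa only [neg_mul] using integrable_exp_neg_mul_sq (by norm_num : (0 : ℝ) < 1 / 2)

lemma integral_exp_neg_half_sum_sq :
    ∫ y : ι → ℝ, Real.exp (-(1 / 2) * ∑ i, y i ^ 2) = √(2 * π) ^ Fintype.card ι := by
  have h1 : ∫ t : ℝ, Real.exp (-(1 / 2) * t ^ 2) = √(2 * π) := by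
    rw [integral_gaussian]; norm_num [div_div_eq_mul_div, mul_comm]
  simp_rw [Finset.mul_sum, Real.exp_sum]
  rw [integral_fintype_prod_volume_eq_pow (fun t : ℝ => Real.exp (-(1 / 2) * t ^ 2)), h1]

variable [DecidableEq ι]

lemma integrable_comp_mulVec {M : Matrix ι ι ℝ} (hM : M.det ≠ 0) {f : (ι → ℝ) → ℝ}
    (hf : Integrable f) : Integrable fun x => f (M *ᵥ x) := by
  have hf' : Integrable f (Measure.map (Matrix.toLin' M) volume) := by
    rw [Real.map_matrix_volume_pi_eq_smul_volume_pi hM]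
    exact hf.smul_measure ENNReal.ofReal_ne_top
  exact (integrable_map_measure hf'.aestronglyMeasurable
    (LinearMap.continuous_on_pi _).aemeasurable).mp hf'

lemma integral_comp_mulVec {M : Matrix ι ι ℝ} (hM : M.det ≠ 0) {f : (ι → ℝ) → ℝ}
    (hf : AEStronglyMeasurable f) : ∫ x, f (M *ᵥ x) = |M.det|⁻¹ * ∫ y, f y := by
  have hmap := Real.map_matrix_volume_pi_eq_smul_volume_pi hM
  have hf' : AEStronglyMeasurable f (Measure.map (Matrix.toLin' M) volume) := by
    rw [hmap]; exact hf.smul_measure _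
  change ∫ x, f (Matrix.toLin' M x) = _
  rw [← integral_map (LinearMap.continuous_on_pi _).aemeasurable hf', hmap,
    integral_smul_measure, ENNReal.toReal_ofReal (abs_nonneg _), smul_eq_mul, abs_inv]

lemma Matrix.PosSemidef.dotProduct_mulVec_eq_sum_sq {A : Matrix ι ι ℝ} (hA : A.PosSemidef)
    (x : ι → ℝ) : x ⬝ᵥ A *ᵥ x = ∑ i, (CFC.sqrt A *ᵥ x) i ^ 2 := by
  have hR : (CFC.sqrt A)ᵀ = CFC.sqrt A := (CFC.sqrt_nonneg A).posSemidef.isHermitian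
  conv_lhs => rw [← CFC.sqrt_mul_sqrt_self A hA.nonneg]
  rw [← mulVec_mulVec, dotProduct_mulVec, ← mulVec_transpose, hR]
  simp only [dotProduct, sq]

lemma Matrix.PosDef.integrable_exp_neg_half_dotProduct_mulVec {A : Matrix ι ι ℝ}
    (hA : A.PosDef) : Integrable fun x => Real.exp (-(1 / 2) * (x ⬝ᵥ A *ᵥ x)) := by
  have hdet : (CFC.sqrt A).det ≠ 0 := by
    rw [hA.posSemidef.det_sqrt, RCLike.sqrt_real]; exact (Real.sqrt_pos.2 hA.det_pos).ne'
  simp_rw [hA.posSemidef.dotProduct_mulVec_eq_sum_sq]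
  exact integrable_comp_mulVec hdet integrable_exp_neg_half_sum_sq

lemma Matrix.PosDef.integral_exp_neg_half_dotProduct_mulVec {A : Matrix ι ι ℝ}
    (hA : A.PosDef) :
    ∫ x, Real.exp (-(1 / 2) * (x ⬝ᵥ A *ᵥ x)) = √(2 * π) ^ Fintype.card ι / √A.det := by
  have hdet : (CFC.sqrt A).det = √A.det := by rw [hA.posSemidef.det_sqrt, RCLike.sqrt_real]
  have hpos : 0 < √A.det := Real.sqrt_pos.2 hA.det_pos
  simp_rw [hA.posSemidef.dotProduct_mulVec_eq_sum_sq]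
  rw [integral_comp_mulVec (hdet ▸ hpos.ne') integrable_exp_neg_half_sum_sq.aestronglyMeasurable,
    integral_exp_neg_half_sum_sq, hdet, abs_of_pos hpos, inv_mul_eq_div]

end GaussianIntegral

lemma Real.rpow_neg_natCast_div_two {a : ℝ} (ha : 0 ≤ a) (n : ℕ) :
    a ^ (-(n : ℝ) / 2) = (√a ^ n)⁻¹ := by
  rw [neg_div, Real.rpow_neg ha, Real.sqrt_eq_rpow, ← Real.rpow_natCast, ← Real.rpow_mul ha,
    one_div_mul_eq_div]

section Density
variable {ι : Type*} [Fintype ι] [DecidableEq ι]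

noncomputable def mvGaussianPDF (μ : ι → ℝ) (S : Matrix ι ι ℝ) (z : ι → ℝ) : ℝ :=
  (2 * π) ^ (-(Fintype.card ι : ℝ) / 2) * S.det ^ (-(1 : ℝ) / 2) *
    Real.exp (-(1 / 2) * ((z - μ) ⬝ᵥ S⁻¹ *ᵥ (z - μ)))

lemma mvGaussian_eq_withDensity (μ : ι → ℝ) (S : Matrix ι ι ℝ) :
    mvGaussian μ S = volume.withDensity fun z => ENNReal.ofReal (mvGaussianPDF μ S z) :=
  rfl

lemma mvGaussianPDF_eq {S : Matrix ι ι ℝ} (hS : 0 ≤ S.det) (μ z : ι → ℝ) :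
    mvGaussianPDF μ S z = Real.exp (-(1 / 2) * ((z - μ) ⬝ᵥ S⁻¹ *ᵥ (z - μ))) /
      (√(2 * π) ^ Fintype.card ι * √S.det) := by
  have hdet : S.det ^ (-(1 : ℝ) / 2) = (√S.det)⁻¹ := by
    simpa using Real.rpow_neg_natCast_div_two hS 1
  rw [mvGaussianPDF, Real.rpow_neg_natCast_div_two (by positivity), hdet]
  ring

lemma integral_mvGaussian {S : Matrix ι ι ℝ} (hS : 0 ≤ S.det) (μ : ι → ℝ)
    (f : (ι → ℝ) → ℝ) : ∫ z, f z ∂mvGaussian μ S = ∫ z, mvGaussianPDF μ S z * f z := by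
  have hmeas : Measurable (mvGaussianPDF μ S) := by unfold mvGaussianPDF; fun_prop
  have hnonneg (z : ι → ℝ) : 0 ≤ mvGaussianPDF μ S z := by
    rw [mvGaussianPDF_eq hS]; positivity
  rw [mvGaussian_eq_withDensity, integral_withDensity_eq_integral_toReal_smul
    hmeas.ennreal_ofReal (.of_forall fun _ => ENNReal.ofReal_lt_top)]
  simp only [ENNReal.toReal_ofReal (hnonneg _), smul_eq_mul]

end Density

section SquaredExponential
variable {ι : Type*} [Fintype ι] [DecidableEq ι] {S : Matrix ι ι ℝ} {σl : ℝ}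

lemma Matrix.PosDef.inv_add_smul_one {s : ℝ} (hS : S.PosDef) (hs : 0 < s) :
    (S⁻¹ + s⁻¹ • (1 : Matrix ι ι ℝ)).PosDef :=
  hS.inv.add (PosDef.one.smul (inv_pos.2 hs))

lemma Matrix.PosDef.sqrt_det_add_smul_one (hS : S.PosDef) (hσl : 0 < σl) :
    √(S + σl ^ 2 • (1 : Matrix ι ι ℝ)).det =
      σl ^ Fintype.card ι * (√S.det * √(S⁻¹ + (σl ^ 2)⁻¹ • (1 : Matrix ι ι ℝ)).det) := by
  rw [← Real.sqrt_mul hS.det_pos.le,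
    det_mul_det_inv_add_smul_one hS.det_pos.ne'.isUnit (pow_ne_zero 2 hσl.ne'),
    Real.sqrt_mul (by positivity), ← inv_pow, ← pow_mul, mul_comm 2, pow_mul,
    Real.sqrt_sq (by positivity), inv_pow, mul_inv_cancel_left₀ (by positivity)]

lemma dotProduct_inv_mulVec_add_sum_sq {s : ℝ} (hS : S.PosDef) (hs : 0 < s) (m x : ι → ℝ) :
    x ⬝ᵥ S⁻¹ *ᵥ x + s⁻¹ * ∑ i, (m i - x i) ^ 2 =
      (x - (S⁻¹ + s⁻¹ • 1)⁻¹ *ᵥ (s⁻¹ • m)) ⬝ᵥ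
          (S⁻¹ + s⁻¹ • 1) *ᵥ (x - (S⁻¹ + s⁻¹ • 1)⁻¹ *ᵥ (s⁻¹ • m)) +
        m ⬝ᵥ (S + s • 1)⁻¹ *ᵥ m := by
  have hB := hS.inv_add_smul_one hs
  have hsum : ∑ i, (m i - x i) ^ 2 = m ⬝ᵥ m - 2 * (m ⬝ᵥ x) + x ⬝ᵥ x := by
    simp only [dotProduct, Finset.mul_sum, ← Finset.sum_sub_distrib, ← Finset.sum_add_distrib]
    exact Finset.sum_congr rfl fun i _ => by ring
  rw [dotProduct_mulVec_sub_inv_mulVec (isHermitian_iff_isSymm.1 hB.isHermitian)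
      hB.det_pos.ne'.isUnit,
    add_smul_one_inv_eq_sub ((isUnit_iff_isUnit_det S).2 hS.det_pos.ne'.isUnit) hs.ne'
      ((isUnit_iff_isUnit_det _).2 hB.det_pos.ne'.isUnit), hsum]
  simp only [add_mulVec, sub_mulVec, smul_mulVec, one_mulVec, mulVec_smul, dotProduct_add,
    dotProduct_sub, dotProduct_smul, smul_dotProduct, smul_eq_mul]
  ring

lemma mvGaussianPDF_zero_mul_kSE (hS : S.PosDef) (hσl : σl ≠ 0) (σf : ℝ) (m x : ι → ℝ) :
    mvGaussianPDF 0 S x * kSE σf σl m x =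
      σf ^ 2 * Real.exp (-(1 / 2) * (m ⬝ᵥ (S + σl ^ 2 • 1)⁻¹ *ᵥ m)) /
          (√(2 * π) ^ Fintype.card ι * √S.det) *
        Real.exp (-(1 / 2) * ((x - (S⁻¹ + (σl ^ 2)⁻¹ • 1)⁻¹ *ᵥ ((σl ^ 2)⁻¹ • m)) ⬝ᵥ
          (S⁻¹ + (σl ^ 2)⁻¹ • 1) *ᵥ (x - (S⁻¹ + (σl ^ 2)⁻¹ • 1)⁻¹ *ᵥ ((σl ^ 2)⁻¹ • m)))) := by
  have hexp := congrArg (fun t => Real.exp (-(1 / 2) * t))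
    (dotProduct_inv_mulVec_add_sum_sq hS (by positivity : 0 < σl ^ 2) m x)
  simp only [mul_add, Real.exp_add] at hexp
  rw [mvGaussianPDF_eq hS.det_pos.le, kSE, sub_zero,
    show -(∑ i, (m i - x i) ^ 2) / (2 * σl ^ 2) =
      -(1 / 2) * ((σl ^ 2)⁻¹ * ∑ i, (m i - x i) ^ 2) by field_simp]
  linear_combination σf ^ 2 / (√(2 * π) ^ Fintype.card ι * √S.det) * hexp

lemma integrable_mvGaussianPDF_zero_mul_kSE (hS : S.PosDef) (hσl : σl ≠ 0) (σf : ℝ)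
    (m : ι → ℝ) : Integrable fun x => mvGaussianPDF 0 S x * kSE σf σl m x := by
  simp_rw [mvGaussianPDF_zero_mul_kSE hS hσl]
  exact ((hS.inv_add_smul_one (by positivity)).integrable_exp_neg_half_dotProduct_mulVec
    |>.comp_sub_right _).const_mul _

lemma integral_mvGaussianPDF_zero_mul_kSE (hS : S.PosDef) (hσl : 0 < σl) (σf : ℝ)
    (m : ι → ℝ) :
    ∫ x, mvGaussianPDF 0 S x * kSE σf σl m x =
      σf ^ 2 * σl ^ Fintype.card ι * Real.exp (-(1 / 2) * (m ⬝ᵥ (S + σl ^ 2 • 1)⁻¹ *ᵥ m)) /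
        √(S + σl ^ 2 • (1 : Matrix ι ι ℝ)).det := by
  simp_rw [mvGaussianPDF_zero_mul_kSE hS hσl.ne']
  rw [integral_const_mul,
    integral_sub_right_eq_self (fun x => Real.exp (-(1 / 2) * (x ⬝ᵥ _ *ᵥ x))),
    (hS.inv_add_smul_one (by positivity)).integral_exp_neg_half_dotProduct_mulVec,
    hS.sqrt_det_add_smul_one hσl]
  have := (hS.inv_add_smul_one (pow_pos hσl 2)).det_pos
  field_simp

end SquaredExponential

theorem GPR_EI_formula_general
    (d : ℕ) (T : ℝ) (hT : 0 < T) (r : ℝ)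
    (Pm : Matrix (Fin d) (Fin d) ℝ) (hPm : Pm.PosDef)
    (σf σl : ℝ) (hσl : 0 < σl)
    (Q : ℕ) (z : Fin Q → Fin d → ℝ) (ω : Fin Q → ℝ) :
    Real.exp (-r * T) * ∫ x, (∑ q, ω q * kSE σf σl (z q) x) ∂(mvGaussian 0 (T • Pm))
    = Real.exp (-r * T) *
        ∑ q, ω q * σf ^ 2 * σl ^ d *
          Real.exp (-(1 / 2) *
            (z q ⬝ᵥ (T • Pm + σl ^ 2 • (1 : Matrix (Fin d) (Fin d) ℝ))⁻¹.mulVec (z q))) /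
          Real.sqrt (T • Pm + σl ^ 2 • (1 : Matrix (Fin d) (Fin d) ℝ)).det := by
  have hS : (T • Pm).PosDef := hPm.smul hT
  congr 1
  rw [integral_mvGaussian hS.det_pos.le]
  simp_rw [Finset.mul_sum, mul_left_comm _ (ω _)]
  rw [integral_finsetSum _ fun q _ =>
    (integrable_mvGaussianPDF_zero_mul_kSE hS hσl.ne' σf (z q)).const_mul (ω q)]
  refine Finset.sum_congr rfl fun q _ => ?_
  rw [integral_const_mul, integral_mvGaussianPDF_zero_mul_kSE hS hσl, Fintype.card_fin]
  ring

/-- Proposition 1 (exact form): the discounted integral of the GPR approximation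
`u^GPR(z) = Σ_q ω_q k_SE(z^q, z)` against the Gaussian measure `N(0, T·Π)` is given
by the GPR-EI closed formula. -/
theorem GPR_EI_formula
    (d : ℕ) (hd : 1 ≤ d) (T : ℝ) (hT : 0 < T) (r : ℝ)
    (Pm : Matrix (Fin d) (Fin d) ℝ) (hPm : Pm.PosDef)
    (σf σl : ℝ) (hσl : 0 < σl)
    (Q : ℕ) (z : Fin Q → Fin d → ℝ) (ω : Fin Q → ℝ) :
    Real.exp (-r * T) * ∫ x, (∑ q, ω q * kSE σf σl (z q) x) ∂(mvGaussian 0 (T • Pm))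
    = Real.exp (-r * T) *
        ∑ q, ω q * σf ^ 2 * σl ^ d *
          Real.exp (-(1 / 2) *
            (z q ⬝ᵥ (T • Pm + σl ^ 2 • (1 : Matrix (Fin d) (Fin d) ℝ))⁻¹.mulVec (z q))) /
          Real.sqrt (T • Pm + σl ^ 2 • (1 : Matrix (Fin d) (Fin d) ℝ)).det :=
  GPR_EI_formula_general d T hT r Pm hPm σf σl hσl Q z ω
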